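/- arXiv:2005.01413 — 2 statements merged into one kernel-verified Lean document; each statement's English description precedes it below -/
import Mathlib

section
/- Let (Ω, μ) be a σ-finite measure space, c : Ω → ℝ₊ measurable, ρ > 0, and φ satisfying both |1 − φ(λ, t)| ≤ (t²/2)(λ² + ρ²) and |1 − φ(λ, t)| ≥ κ for λt ≥ 1 (κ > 0). Suppose F ∈ L²(Ω, μ) and (c² + ρ²)^r F ∈ L²(Ω, μ) for some r ∈ ℕ. Then for all ν ≥ ρ and k ∈ ℕ, ‖F·χ_{{c ≥ ν}}‖₂ ≤ κ^{−(k+r)} 2^{−r} ν^{−2r} ‖(1 − φ(c(·), 1/ν))^k (c² + ρ²)^r F‖₂. -/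
/-!
On `{c ≥ ν}` the lower bound on `|1 - φ|` gives `|1 - φ(c, 1/ν)| ≥ κ`; combined with the upper
bound at `t = 1/ν` it also gives `c² + ρ² ≥ 2κν²`. Hence the multiplier
`(1 - φ(c, 1/ν))^k (c² + ρ²)^r` is at least `κ^(k+r) 2^r ν^(2r)` in absolute value there, and the
estimate follows pointwise.
-/

open MeasureTheory ENNReal

theorem eLpNorm_indicator_le_of_le_abs {Ω E : Type*} [MeasurableSpace Ω] [NormedAddCommGroup E]
    [NormedSpace ℝ E] (μ : Measure Ω) (p : ℝ≥0∞) {s : Set Ω} {w : Ω → ℝ} {a : ℝ} (ha : 0 < a)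
    (hw : ∀ x ∈ s, a ≤ |w x|) (F : Ω → E) :
    eLpNorm (s.indicator F) p μ ≤ ENNReal.ofReal a⁻¹ * eLpNorm (fun x => w x • F x) p μ := by
  refine eLpNorm_le_mul_eLpNorm_of_ae_le_mul (Filter.Eventually.of_forall fun x => ?_) p
  by_cases hx : x ∈ s
  · rw [Set.indicator_of_mem hx, norm_smul, Real.norm_eq_abs, ← mul_assoc]
    exact le_mul_of_one_le_left (norm_nonneg _) ((le_inv_mul_iff₀ ha).2 (by simpa using hw x hx))
  · rw [Set.indicator_of_notMem hx, norm_zero]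
    positivity

section Multiplier

variable {ρ κ ν : ℝ} {φ : ℝ → ℝ → ℝ}

theorem le_abs_one_sub_of_le {lam : ℝ} (hν : 0 < ν) (hlam : ν ≤ lam)
    (hφl : ∀ lam t : ℝ, 0 ≤ lam → 0 < t → 1 ≤ lam * t → κ ≤ |1 - φ lam t|) :
    κ ≤ |1 - φ lam (1 / ν)| :=
  hφl lam (1 / ν) (hν.le.trans hlam) (by positivity) (by rw [mul_one_div, le_div_iff₀ hν]; linarith)

theorem two_mul_sq_mul_le_sq_add_sq {lam : ℝ} (hν : 0 < ν) (hlam : ν ≤ lam)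
    (hφu : ∀ lam t : ℝ, 0 ≤ lam → 0 < t → |1 - φ lam t| ≤ t ^ 2 / 2 * (lam ^ 2 + ρ ^ 2))
    (hφl : ∀ lam t : ℝ, 0 ≤ lam → 0 < t → 1 ≤ lam * t → κ ≤ |1 - φ lam t|) :
    2 * ν ^ 2 * κ ≤ lam ^ 2 + ρ ^ 2 := by
  have h := (le_abs_one_sub_of_le hν hlam hφl).trans
    (hφu lam (1 / ν) (hν.le.trans hlam) (by positivity))
  rw [div_pow, one_pow, div_div, one_div_mul_eq_div, le_div_iff₀ (by positivity)] at h
  linarith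

theorem le_abs_multiplier {lam : ℝ} (hκ : 0 < κ) (hν : 0 < ν) (hlam : ν ≤ lam)
    (hφu : ∀ lam t : ℝ, 0 ≤ lam → 0 < t → |1 - φ lam t| ≤ t ^ 2 / 2 * (lam ^ 2 + ρ ^ 2))
    (hφl : ∀ lam t : ℝ, 0 ≤ lam → 0 < t → 1 ≤ lam * t → κ ≤ |1 - φ lam t|) (k r : ℕ) :
    κ ^ (k + r) * 2 ^ r * ν ^ (2 * r) ≤ |(1 - φ lam (1 / ν)) ^ k * (lam ^ 2 + ρ ^ 2) ^ r| := by
  have hmult : κ ^ k ≤ |1 - φ lam (1 / ν)| ^ k :=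
    pow_le_pow_left₀ hκ.le (le_abs_one_sub_of_le hν hlam hφl) k
  have hsmooth : (2 * ν ^ 2 * κ) ^ r ≤ (lam ^ 2 + ρ ^ 2) ^ r :=
    pow_le_pow_left₀ (by positivity) (two_mul_sq_mul_le_sq_add_sq hν hlam hφu hφl) r
  calc κ ^ (k + r) * 2 ^ r * ν ^ (2 * r) = κ ^ k * (2 * ν ^ 2 * κ) ^ r := by ring
    _ ≤ |1 - φ lam (1 / ν)| ^ k * (lam ^ 2 + ρ ^ 2) ^ r :=
      mul_le_mul hmult hsmooth (by positivity) (by positivity)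
    _ = _ := by rw [abs_mul, abs_pow, abs_pow, abs_of_nonneg (by positivity : 0 ≤ lam ^ 2 + ρ ^ 2)]

end Multiplier

theorem stmt_10_general
    {Ω : Type*} [MeasurableSpace Ω] (μ : Measure Ω)
    (c : Ω → ℝ)
    (ρ : ℝ) (hρ : 0 < ρ) (φ : ℝ → ℝ → ℝ) (κ : ℝ) (hκ : 0 < κ)
    (hφu : ∀ lam t : ℝ, 0 ≤ lam → 0 < t → |1 - φ lam t| ≤ t ^ 2 / 2 * (lam ^ 2 + ρ ^ 2))
    (hφl : ∀ lam t : ℝ, 0 ≤ lam → 0 < t → 1 ≤ lam * t → κ ≤ |1 - φ lam t|)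
    (r : ℕ) (F : Ω → ℂ)
    (ν : ℝ) (hν : ρ ≤ ν) (k : ℕ) :
    eLpNorm ({x | ν ≤ c x}.indicator F) 2 μ ≤
      ENNReal.ofReal ((1 / κ) ^ (k + r) * (1 / 2) ^ r * (1 / ν) ^ (2 * r)) *
        eLpNorm
          (fun x => (((1 - φ (c x) (1 / ν)) ^ k * (c x ^ 2 + ρ ^ 2) ^ r : ℝ)) • F x) 2 μ := by
  have hν0 : 0 < ν := hρ.trans_le hν
  have hconst : (1 / κ) ^ (k + r) * (1 / 2) ^ r * (1 / ν) ^ (2 * r) =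
      (κ ^ (k + r) * 2 ^ r * ν ^ (2 * r))⁻¹ := by
    simp only [one_div, inv_pow, mul_inv]
  rw [hconst]
  exact eLpNorm_indicator_le_of_le_abs μ 2 (by positivity)
    (fun x hx => le_abs_multiplier hκ hν0 hx hφu hφl k r) F

/-- Fourier-side version of the second Jackson-type theorem with extra smoothness r. -/
theorem stmt_10
    {Ω : Type*} [MeasurableSpace Ω] (μ : Measure Ω) [SigmaFinite μ]
    (c : Ω → ℝ) (hc : Measurable c) (hc0 : ∀ x, 0 ≤ c x)
    (ρ : ℝ) (hρ : 0 < ρ) (φ : ℝ → ℝ → ℝ) (κ : ℝ) (hκ : 0 < κ)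
    (hφu : ∀ lam t : ℝ, 0 ≤ lam → 0 < t → |1 - φ lam t| ≤ t ^ 2 / 2 * (lam ^ 2 + ρ ^ 2))
    (hφl : ∀ lam t : ℝ, 0 ≤ lam → 0 < t → 1 ≤ lam * t → κ ≤ |1 - φ lam t|)
    (r : ℕ) (F : Ω → ℂ) (hF : MemLp F 2 μ)
    (hFr : MemLp (fun x => (((c x ^ 2 + ρ ^ 2) ^ r : ℝ)) • F x) 2 μ)
    (ν : ℝ) (hν : ρ ≤ ν) (k : ℕ) :
    eLpNorm ({x | ν ≤ c x}.indicator F) 2 μ ≤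
      ENNReal.ofReal ((1 / κ) ^ (k + r) * (1 / 2) ^ r * (1 / ν) ^ (2 * r)) *
        eLpNorm
          (fun x => (((1 - φ (c x) (1 / ν)) ^ k * (c x ^ 2 + ρ ^ 2) ^ r : ℝ)) • F x) 2 μ :=
  stmt_10_general μ c ρ hρ φ κ hκ hφu hφl r F ν hν k
end

section
/- Let α > −1/2 and let j_α(x) = Γ(α+1)(2/x)^α J_α(x) be the normalized Bessel function of the first kind with j_α(0) = 1. Then there exist positive constants c₁(α), c₂(α) such that c₁ min{1, (λt)²} ≤ 1 − j_α(λt) ≤ c₂ min{1, (λt)²} for all λ, t ≥ 0. -/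
/-- The normalized Bessel function of the first kind
j_α(x) = Γ(α+1)(2/x)^α J_α(x), given by its power series, with j_α(0) = 1. -/
noncomputable def besselJNorm (α : ℝ) (x : ℝ) : ℝ :=
  ∑' n : ℕ, ((-1 : ℝ) ^ n * Real.Gamma (α + 1) /
      ((n.factorial : ℝ) * Real.Gamma ((n : ℝ) + α + 1))) * (x / 2) ^ (2 * n)

/-!
Integrating the cosine series termwise against the weight `w(t) = (1 - t²)^(α - 1/2)` on
`(-1, 1)`, whose even moments satisfy `(2n + 2α + 2) m_{n+1} = (2n + 1) m_n`, gives Poisson's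
integral `m₀ j_α(s) = ∫ cos(st) w(t) dt`, hence `m₀ (1 - j_α(s)) = ∫ (1 - cos(st)) w(t) dt`.
The upper estimate follows from `1 - cos x ≤ 2 min{1, x²}`. For the lower one,
`1 - cos x ≥ 2x²/π²` on `|x| ≤ π` handles `s ≤ 1`; on `[1, ∞)` the integral is continuous,
positive, and tends to `m₀` by the Riemann–Lebesgue lemma, so it is bounded below there.
-/

open Real MeasureTheory Set Filter Topology
open scoped FourierTransform

lemma integrableOn_one_sub_sq_rpow {e : ℝ} (he : -1 < e) :
    IntegrableOn (fun t : ℝ => (1 - t ^ 2) ^ e) (Ioo (-1) 1) := by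
  have hpow : IntervalIntegrable (fun x : ℝ => x ^ e) volume 0 2 :=
    intervalIntegral.intervalIntegrable_rpow' he
  have hleft : IntegrableOn (fun t : ℝ => (1 - t) ^ e) (Ioo (-1) 1) := by
    have := (hpow.comp_sub_left 1).symm
    norm_num at this
    exact (intervalIntegrable_iff_integrableOn_Ioo_of_le (by norm_num)).1 this
  have hright : IntegrableOn (fun t : ℝ => (1 + t) ^ e) (Ioo (-1) 1) := by
    have := hpow.comp_add_left 1
    norm_num at this
    exact (intervalIntegrable_iff_integrableOn_Ioo_of_le (by norm_num)).1 this
  have hfactor_le : ∀ x : ℝ, 1 ≤ x → x ≤ 2 → x ^ e ≤ 2 ^ |e| := fun x h1 h2 =>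
    (Real.rpow_le_rpow_of_exponent_le h1 (le_abs_self e)).trans
      (Real.rpow_le_rpow (by linarith) h2 (abs_nonneg e))
  -- one of the factors of `(1 - t ^ 2) ^ e = (1 - t) ^ e * (1 + t) ^ e` has its base in `[1, 2]`
  refine ((hleft.add hright).const_mul (2 ^ |e|)).mono'
    (by fun_prop : Measurable fun t : ℝ => (1 - t ^ 2) ^ e).aestronglyMeasurable ?_
  filter_upwards [ae_restrict_mem measurableSet_Ioo] with t ⟨ht1, ht2⟩
  simp only [Pi.add_apply]
  have hl : 0 ≤ (1 - t) ^ e := Real.rpow_nonneg (by linarith) e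
  have hr : 0 ≤ (1 + t) ^ e := Real.rpow_nonneg (by linarith) e
  rw [Real.norm_of_nonneg (Real.rpow_nonneg (by nlinarith) e),
    show 1 - t ^ 2 = (1 - t) * (1 + t) by ring, Real.mul_rpow (by linarith) (by linarith)]
  have hB : (0 : ℝ) ≤ 2 ^ |e| := by positivity
  rcases le_total 0 t with h | h
  · nlinarith [mul_le_mul_of_nonneg_left (hfactor_le (1 + t) (by linarith) (by linarith)) hl,
      mul_nonneg hB hr]
  · nlinarith [mul_le_mul_of_nonneg_right (hfactor_le (1 - t) (by linarith) (by linarith)) hr,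
      mul_nonneg hB hl]

lemma one_sub_cos_le_two_mul_min (x : ℝ) : 1 - cos x ≤ 2 * min 1 (x ^ 2) := by
  rcases le_total 1 (x ^ 2) with h | h
  · rw [min_eq_left h]; linarith [neg_one_le_cos x]
  · rw [min_eq_right h]; nlinarith [one_sub_sq_div_two_le_cos (x := x), sq_nonneg x]

lemma tendsto_integral_cos_mul_atTop {f : ℝ → ℝ} (hf : Integrable f) :
    Tendsto (fun s => ∫ t, cos (s * t) * f t) atTop (𝓝 0) := by
  have hRL := (Real.tendsto_integral_exp_smul_cocompact (fun t => (f t : ℂ))).comp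
    ((tendsto_id.atTop_div_const (by positivity : 0 < 2 * π)).mono_right atTop_le_cocompact)
  have hre := (Complex.continuous_re.tendsto 0).comp hRL
  rw [Complex.zero_re] at hre
  refine hre.congr fun s => ?_
  have hint : Integrable (fun t : ℝ => 𝐞 (-(t * (s / (2 * π)))) • (f t : ℂ)) :=
    hf.norm.mono' (by fun_prop) (by simp)
  simp only [Function.comp_apply, id]
  rw [← RCLike.re_eq_complex_re, ← integral_re hint]
  congr 1 with t
  simp only [Circle.smul_def, Real.fourierChar_apply, smul_eq_mul, RCLike.re_to_complex,
    Complex.re_mul_ofReal, Complex.exp_ofReal_mul_I_re]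
  rw [show 2 * π * -(t * (s / (2 * π))) = -(s * t) by field_simp, cos_neg]

lemma exists_pos_le_of_continuousOn_Ici_of_tendsto {f : ℝ → ℝ} {a L : ℝ}
    (hf : ContinuousOn f (Ici a)) (hpos : ∀ x, a ≤ x → 0 < f x)
    (hlim : Tendsto f atTop (𝓝 L)) (hL : 0 < L) : ∃ c, 0 < c ∧ ∀ x, a ≤ x → c ≤ f x := by
  obtain ⟨M, hM⟩ := eventually_atTop.1 (hlim.eventually_const_lt (half_lt_self hL))
  obtain ⟨x₀, hx₀, hmin⟩ := isCompact_Icc.exists_isMinOn (nonempty_Icc.2 (le_max_left a M))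
    (hf.mono Icc_subset_Ici_self)
  refine ⟨min (f x₀) (L / 2), lt_min (hpos x₀ hx₀.1) (half_pos hL), fun x hx => ?_⟩
  rcases le_total x (max a M) with h | h
  · exact (min_le_left _ _).trans (hmin ⟨hx, h⟩)
  · exact (min_le_right _ _).trans (hM x ((le_max_right a M).trans h)).le

section

variable {α : ℝ}

noncomputable def besselWeight (α t : ℝ) : ℝ := (1 - t ^ 2) ^ (α - 1 / 2)

lemma besselWeight_pos {t : ℝ} (ht : t ∈ Ioo (-1 : ℝ) 1) : 0 < besselWeight α t :=
  Real.rpow_pos_of_pos (by nlinarith [ht.1, ht.2]) _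

lemma integrableOn_besselWeight (hα : -1 / 2 < α) :
    IntegrableOn (besselWeight α) (Ioo (-1) 1) :=
  integrableOn_one_sub_sq_rpow (by linarith)

lemma integrableOn_mul_besselWeight (hα : -1 / 2 < α) {g : ℝ → ℝ} (hg : Continuous g) :
    IntegrableOn (fun t => g t * besselWeight α t) (Ioo (-1) 1) :=
  (integrableOn_besselWeight hα).continuousOn_mul_of_subset hg.continuousOn isCompact_Icc
    measurableSet_Ioo Ioo_subset_Icc_self

noncomputable def besselMoment (α : ℝ) (n : ℕ) : ℝ :=
  ∫ t in Ioo (-1 : ℝ) 1, t ^ (2 * n) * besselWeight α t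

lemma besselMoment_pos (hα : -1 / 2 < α) (n : ℕ) : 0 < besselMoment α n := by
  rw [besselMoment, setIntegral_pos_iff_support_of_nonneg_ae]
  · refine lt_of_lt_of_le (by simp) (measure_mono (fun t (ht : t ∈ Ioo (0 : ℝ) 1) => ?_))
    have ht' : t ∈ Ioo (-1 : ℝ) 1 := ⟨by linarith [ht.1], ht.2⟩
    exact ⟨(mul_pos (pow_pos ht.1 _) (besselWeight_pos ht')).ne', ht'⟩
  · filter_upwards [ae_restrict_mem measurableSet_Ioo] with t ht
    exact mul_nonneg ((even_two_mul n).pow_nonneg t) (besselWeight_pos ht).le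
  · exact integrableOn_mul_besselWeight hα (continuous_pow _)

lemma hasDerivAt_pow_mul_one_sub_sq_rpow (n : ℕ) {t : ℝ} (ht : t ∈ Ioo (-1 : ℝ) 1) :
    HasDerivAt (fun t => t ^ (2 * n + 1) * (1 - t ^ 2) ^ (α + 1 / 2))
      ((2 * n + 1) * (t ^ (2 * n) * besselWeight α t)
        - (2 * n + 2 * α + 2) * (t ^ (2 * (n + 1)) * besselWeight α t)) t := by
  have hbase : 0 < 1 - t ^ 2 := by nlinarith [ht.1, ht.2]
  have hpow : HasDerivAt (fun t : ℝ => t ^ (2 * n + 1)) ((2 * n + 1 : ℕ) * t ^ (2 * n)) t := by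
    simpa using hasDerivAt_pow (2 * n + 1) t
  have hrpow : HasDerivAt (fun t : ℝ => (1 - t ^ 2) ^ (α + 1 / 2))
      ((α + 1 / 2) * (1 - t ^ 2) ^ (α + 1 / 2 - 1) * -(2 * t)) t :=
    ((Real.hasDerivAt_rpow_const (Or.inl hbase.ne')).comp t
      (by simpa using (hasDerivAt_pow 2 t).const_sub 1) :)
  refine (hpow.mul hrpow).congr_deriv ?_
  rw [show α + 1 / 2 = (α - 1 / 2) + 1 by ring, Real.rpow_add_one hbase.ne',
    show α - 1 / 2 + 1 - 1 = α - 1 / 2 by ring, besselWeight]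
  push_cast
  ring

lemma besselMoment_succ (hα : -1 / 2 < α) (n : ℕ) :
    (2 * n + 2 * α + 2) * besselMoment α (n + 1) = (2 * n + 1) * besselMoment α n := by
  have hp : 0 < α + 1 / 2 := by linarith
  have hint : ∀ k : ℕ, IntegrableOn (fun t => t ^ (2 * k) * besselWeight α t) (Ioo (-1) 1) :=
    fun k => integrableOn_mul_besselWeight hα (continuous_pow _)
  -- integration by parts: `t ^ (2 * n + 1) * (1 - t ^ 2) ^ (α + 1 / 2)` vanishes at `±1`
  have hftc := intervalIntegral.integral_eq_sub_of_hasDerivAt_of_le (by norm_num : (-1 : ℝ) ≤ 1)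
    ((continuous_pow _).mul ((continuous_const.sub (continuous_pow 2)).rpow_const
      fun _ => Or.inr hp.le)).continuousOn
    (fun t ht => hasDerivAt_pow_mul_one_sub_sq_rpow n ht)
    ((intervalIntegrable_iff_integrableOn_Ioo_of_le (by norm_num)).2
      (((hint n).const_mul _).sub ((hint (n + 1)).const_mul _)))
  rw [intervalIntegral.integral_of_le (by norm_num), integral_Ioc_eq_integral_Ioo,
    integral_sub ((hint n).const_mul _) ((hint (n + 1)).const_mul _),
    integral_const_mul, integral_const_mul] at hftc
  simp only [Pi.mul_apply, Pi.sub_apply, one_pow, neg_one_sq, sub_self, Real.zero_rpow hp.ne',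
    mul_zero] at hftc
  rw [besselMoment, besselMoment]
  linarith

lemma besselMoment_mul_four_pow_factorial_Gamma (hα : -1 / 2 < α) (n : ℕ) :
    besselMoment α n * (4 ^ n * n.factorial * Gamma (n + α + 1))
      = besselMoment α 0 * ((2 * n).factorial * Gamma (α + 1)) := by
  induction n with
  | zero => simp
  | succ n ih =>
    have hΓ : (n : ℝ) + α + 1 ≠ 0 := by linarith [n.cast_nonneg (α := ℝ)]
    rw [show 2 * (n + 1) = 2 * n + 1 + 1 by ring, Nat.factorial_succ, Nat.factorial_succ,
      Nat.factorial_succ]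
    push_cast
    rw [show (n : ℝ) + 1 + α + 1 = (n + α + 1) + 1 by ring, Gamma_add_one hΓ]
    linear_combination (2 * (n + 1) * 4 ^ n * n.factorial * Gamma (n + α + 1))
      * besselMoment_succ hα n + (2 * (n + 1) * (2 * n + 1)) * ih

lemma besselMoment_zero :
    besselMoment α 0 = ∫ t in Ioo (-1 : ℝ) 1, besselWeight α t := by
  simp [besselMoment]

lemma integral_cos_term_mul_besselWeight (hα : -1 / 2 < α) (s : ℝ) (n : ℕ) :
    ∫ t in Ioo (-1 : ℝ) 1, (-1) ^ n * (s * t) ^ (2 * n) / (2 * n).factorial * besselWeight α t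
      = besselMoment α 0 * ((-1) ^ n * Gamma (α + 1) / (n.factorial * Gamma (n + α + 1))
        * (s / 2) ^ (2 * n)) := by
  have hΓ : 0 < Gamma (n + α + 1) := Gamma_pos_of_pos (by linarith [n.cast_nonneg (α := ℝ)])
  have hfact : (0 : ℝ) < (2 * n).factorial := by positivity
  have hintegrand :
      (fun t => (-1) ^ n * (s * t) ^ (2 * n) / (2 * n).factorial * besselWeight α t) = fun t =>
        (-1) ^ n * s ^ (2 * n) / (2 * n).factorial * (t ^ (2 * n) * besselWeight α t) := by
    funext t; ring
  rw [hintegrand, integral_const_mul, ← besselMoment, div_pow,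
    show (2 : ℝ) ^ (2 * n) = 4 ^ n by rw [pow_mul]; norm_num]
  field_simp
  linear_combination s ^ (2 * n) * besselMoment_mul_four_pow_factorial_Gamma hα n

lemma besselMoment_zero_mul_besselJNorm (hα : -1 / 2 < α) (s : ℝ) :
    besselMoment α 0 * besselJNorm α s
      = ∫ t in Ioo (-1 : ℝ) 1, cos (s * t) * besselWeight α t := by
  set F : ℕ → ℝ → ℝ :=
    fun n t => (-1) ^ n * (s * t) ^ (2 * n) / (2 * n).factorial * besselWeight α t
  have hF : ∀ n, IntegrableOn (F n) (Ioo (-1) 1) :=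
    fun n => integrableOn_mul_besselWeight hα (by fun_prop)
  have hnorm : ∀ n, ∫ t in Ioo (-1 : ℝ) 1, ‖F n t‖
      ≤ s ^ (2 * n) / (2 * n).factorial * besselMoment α 0 := by
    intro n
    rw [besselMoment_zero, ← integral_const_mul]
    refine setIntegral_mono_on (hF n).norm ((integrableOn_besselWeight hα).const_mul _)
      measurableSet_Ioo fun t ht => ?_
    have ht2 : t ^ 2 ≤ 1 := by nlinarith [ht.1, ht.2]
    have hst : (s * t) ^ (2 * n) ≤ s ^ (2 * n) := by
      rw [mul_pow, pow_mul t]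
      exact mul_le_of_le_one_right ((even_two_mul n).pow_nonneg s)
        (pow_le_one₀ (sq_nonneg t) ht2)
    rw [Real.norm_eq_abs, abs_mul, abs_div, abs_mul, abs_pow, abs_neg, abs_one, one_pow, one_mul,
      Nat.abs_cast, abs_of_nonneg ((even_two_mul n).pow_nonneg _),
      abs_of_pos (besselWeight_pos ht)]
    exact mul_le_mul_of_nonneg_right (by gcongr) (besselWeight_pos ht).le
  have hsum := hasSum_integral_of_summable_integral_norm hF
    (((Real.hasSum_cosh s).mul_right _).summable.of_nonneg_of_le
      (fun n => integral_nonneg fun _ => norm_nonneg _) hnorm)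
  have hcos : ∫ t in Ioo (-1 : ℝ) 1, ∑' n, F n t
      = ∫ t in Ioo (-1 : ℝ) 1, cos (s * t) * besselWeight α t := by
    simp only [F, tsum_mul_right, ← Real.cos_eq_tsum]
  rw [besselJNorm, ← tsum_mul_left, ← hcos, ← hsum.tsum_eq]
  exact tsum_congr fun n => (integral_cos_term_mul_besselWeight hα s n).symm

noncomputable def besselGap (α s : ℝ) : ℝ :=
  ∫ t in Ioo (-1 : ℝ) 1, (1 - cos (s * t)) * besselWeight α t

lemma besselGap_eq (hα : -1 / 2 < α) (s : ℝ) :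
    besselGap α s
      = besselMoment α 0 - ∫ t in Ioo (-1 : ℝ) 1, cos (s * t) * besselWeight α t := by
  rw [besselGap, besselMoment_zero, ← integral_sub (integrableOn_besselWeight hα)
    (integrableOn_mul_besselWeight hα (by fun_prop))]
  simp only [sub_mul, one_mul]

lemma besselMoment_zero_mul_one_sub_besselJNorm (hα : -1 / 2 < α) (s : ℝ) :
    besselMoment α 0 * (1 - besselJNorm α s) = besselGap α s := by
  rw [mul_one_sub, besselMoment_zero_mul_besselJNorm hα, besselGap_eq hα]

lemma continuous_besselGap (hα : -1 / 2 < α) : Continuous (besselGap α) := by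
  refine continuous_of_dominated
    (fun s => (integrableOn_mul_besselWeight hα (by fun_prop)).aestronglyMeasurable)
    (fun s => ?_) ((integrableOn_besselWeight hα).const_mul 2)
    (ae_of_all _ fun t => by fun_prop)
  filter_upwards [ae_restrict_mem measurableSet_Ioo] with t ht
  rw [norm_mul, Real.norm_of_nonneg (besselWeight_pos ht).le, Real.norm_eq_abs,
    abs_of_nonneg (sub_nonneg.2 (cos_le_one _))]
  exact mul_le_mul_of_nonneg_right (by linarith [neg_one_le_cos (s * t)])
    (besselWeight_pos ht).le

lemma tendsto_besselGap_atTop (hα : -1 / 2 < α) :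
    Tendsto (besselGap α) atTop (𝓝 (besselMoment α 0)) := by
  have hRL := tendsto_integral_cos_mul_atTop
    ((integrable_indicator_iff measurableSet_Ioo).2 (integrableOn_besselWeight hα))
  have hind : ∀ s, ∫ t, cos (s * t) * (Ioo (-1 : ℝ) 1).indicator (besselWeight α) t
      = ∫ t in Ioo (-1 : ℝ) 1, cos (s * t) * besselWeight α t := fun s => by
    rw [← integral_indicator measurableSet_Ioo]
    simp only [indicator_mul_right]
  simp only [hind] at hRL
  simpa [funext (besselGap_eq hα)] using tendsto_const_nhds.sub hRL

lemma besselGap_le (hα : -1 / 2 < α) (s : ℝ) :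
    besselGap α s ≤ 2 * besselMoment α 0 * min 1 (s ^ 2) := by
  rw [besselMoment_zero, mul_comm 2, mul_assoc, ← smul_eq_mul, ← integral_smul_const]
  refine setIntegral_mono_on (integrableOn_mul_besselWeight hα (by fun_prop))
    ((integrableOn_besselWeight hα).smul_const _) measurableSet_Ioo fun t ht => ?_
  have hst : (s * t) ^ 2 ≤ s ^ 2 := by
    rw [mul_pow]; exact mul_le_of_le_one_right (sq_nonneg s) (by nlinarith [ht.1, ht.2])
  rw [smul_eq_mul, mul_comm (besselWeight α t)]
  exact mul_le_mul_of_nonneg_right ((one_sub_cos_le_two_mul_min _).trans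
    (by gcongr)) (besselWeight_pos ht).le

lemma sq_mul_besselMoment_one_le_besselGap (hα : -1 / 2 < α) {s : ℝ} (hs : |s| ≤ π) :
    2 / π ^ 2 * s ^ 2 * besselMoment α 1 ≤ besselGap α s := by
  rw [besselMoment, ← integral_const_mul]
  refine setIntegral_mono_on ((integrableOn_mul_besselWeight hα (by fun_prop)).const_mul _)
    (integrableOn_mul_besselWeight hα (by fun_prop)) measurableSet_Ioo fun t ht => ?_
  have hst : |s * t| ≤ π := by
    rw [abs_mul]
    exact (mul_le_of_le_one_right (abs_nonneg s) (abs_le.2 ⟨ht.1.le, ht.2.le⟩)).trans hs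
  have hcos := cos_le_one_sub_mul_cos_sq hst
  rw [← mul_assoc]
  refine mul_le_mul_of_nonneg_right ?_ (besselWeight_pos ht).le
  calc 2 / π ^ 2 * s ^ 2 * t ^ (2 * 1) = 2 / π ^ 2 * (s * t) ^ 2 := by ring
    _ ≤ 1 - cos (s * t) := by linarith

lemma besselGap_pos (hα : -1 / 2 < α) {s : ℝ} (hs : 0 < s) : 0 < besselGap α s := by
  rw [besselGap, setIntegral_pos_iff_support_of_nonneg_ae]
  · have hc : 0 < min 1 (π / s) := lt_min one_pos (div_pos pi_pos hs)
    refine lt_of_lt_of_le (by simpa using hc)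
      (measure_mono fun t (ht : t ∈ Ioo 0 (min 1 (π / s))) => ?_)
    have ht' : t ∈ Ioo (-1 : ℝ) 1 := ⟨by linarith [ht.1], ht.2.trans_le (min_le_left _ _)⟩
    have hst : |s * t| ≤ π := by
      rw [abs_of_pos (mul_pos hs ht.1), ← le_div_iff₀' hs]
      exact ht.2.le.trans (min_le_right _ _)
    have hcos := cos_le_one_sub_mul_cos_sq hst
    have hpos : 0 < 2 / π ^ 2 * (s * t) ^ 2 := by
      have := mul_pos hs ht.1
      positivity
    exact ⟨(mul_pos (by linarith) (besselWeight_pos ht')).ne', ht'⟩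
  · filter_upwards [ae_restrict_mem measurableSet_Ioo] with t ht
    exact mul_nonneg (sub_nonneg.2 (cos_le_one _)) (besselWeight_pos ht).le
  · exact integrableOn_mul_besselWeight hα (by fun_prop)

lemma exists_pos_mul_min_le_besselGap (hα : -1 / 2 < α) :
    ∃ c, 0 < c ∧ ∀ s, 0 ≤ s → c * min 1 (s ^ 2) ≤ besselGap α s := by
  obtain ⟨c, hc, hlarge⟩ := exists_pos_le_of_continuousOn_Ici_of_tendsto (a := 1)
    (continuous_besselGap hα).continuousOn (fun s hs => besselGap_pos hα (by linarith))
    (tendsto_besselGap_atTop hα) (besselMoment_pos hα 0)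
  have hsmall : 0 < 2 / π ^ 2 * besselMoment α 1 := by
    have := besselMoment_pos hα 1
    positivity
  refine ⟨min c (2 / π ^ 2 * besselMoment α 1), lt_min hc hsmall, fun s hs => ?_⟩
  rcases le_total s 1 with h | h
  · rw [min_eq_right (show s ^ 2 ≤ 1 by nlinarith)]
    calc min c (2 / π ^ 2 * besselMoment α 1) * s ^ 2
        ≤ 2 / π ^ 2 * besselMoment α 1 * s ^ 2 := by gcongr; exact min_le_right _ _
      _ = 2 / π ^ 2 * s ^ 2 * besselMoment α 1 := by ring
      _ ≤ besselGap α s := sq_mul_besselMoment_one_le_besselGap hα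
          (by rw [abs_of_nonneg hs]; linarith [pi_gt_three])
  · rw [min_eq_left (show 1 ≤ s ^ 2 by nlinarith), mul_one]
    exact (min_le_left _ _).trans (hlarge s h)
end

/-- Two-sided estimate c₁ min{1, (λt)²} ≤ 1 − j_α(λt) ≤ c₂ min{1, (λt)²}. -/
theorem stmt_11 (α : ℝ) (hα : -1 / 2 < α) :
    ∃ c₁ c₂ : ℝ, 0 < c₁ ∧ 0 < c₂ ∧ ∀ lam t : ℝ, 0 ≤ lam → 0 ≤ t →
      c₁ * min 1 ((lam * t) ^ 2) ≤ 1 - besselJNorm α (lam * t) ∧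
      1 - besselJNorm α (lam * t) ≤ c₂ * min 1 ((lam * t) ^ 2) := by
  obtain ⟨c, hc, hlower⟩ := exists_pos_mul_min_le_besselGap hα
  have hM := besselMoment_pos hα 0
  refine ⟨c / besselMoment α 0, 2, div_pos hc hM, two_pos, fun lam t hlam ht => ?_⟩
  have hgap := besselMoment_zero_mul_one_sub_besselJNorm hα (lam * t)
  constructor
  · rw [div_mul_eq_mul_div, div_le_iff₀ hM, mul_comm _ (besselMoment α 0), hgap]
    exact hlower _ (mul_nonneg hlam ht)
  · refine le_of_mul_le_mul_left ?_ hM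
    rw [hgap, ← mul_assoc, mul_comm _ (2 : ℝ)]
    exact besselGap_le hα _
end
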